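/- arXiv:2503.06079 — 6 statements merged into one kernel-verified Lean document; each statement's English description precedes it below -/
import Mathlib

section
/- Let m ∈ ℝ, σ > 0, and y ∈ ℝ. Let Φ and φ denote the cumulative distribution function and probability density function of the standard normal distribution N(0,1), and set z := (y − m)/σ. Then the Continuous Ranked Probability Score of the Gaussian N(m, σ²) evaluated at y satisfies ∫_ℝ (Φ((t − m)/σ) − 1_{t ≥ y})² dt = σ · ( z·(2Φ(z) − 1) + 2φ(z) − 1/√π ). -/
/-!
Split the integral at `z = (y - m) / σ` (after the substitution `t = m + σ u`). Below `z` the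
integrand is `Φ²`, whose primitive `P z = z Φ(z)² + 2 φ(z) Φ(z) - Φ(√2 z) / √π` vanishes at `-∞`
thanks to the Gaussian tail `Φ(z) ≤ e^{z + 1/2}`. Above `z` it is `(1 - Φ)² = Φ(-·)²`, so by
reflection that half equals `P (-z)`, and `P z + P (-z)` is the closed form.
-/

open MeasureTheory Real Set Filter Topology

/-- The probability density function of the standard normal distribution `N(0,1)`. -/
noncomputable def stdNormalPDF (u : ℝ) : ℝ :=
  Real.exp (-u ^ 2 / 2) / Real.sqrt (2 * Real.pi)

/-- The cumulative distribution function of the standard normal distribution `N(0,1)`. -/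
noncomputable def stdNormalCDF (z : ℝ) : ℝ :=
  ∫ u in Set.Iic z, stdNormalPDF u

lemma stdNormalPDF_eq_gaussianPDFReal : stdNormalPDF = ProbabilityTheory.gaussianPDFReal 0 1 := by
  ext u
  simp [stdNormalPDF, ProbabilityTheory.gaussianPDFReal, div_eq_inv_mul]

lemma stdNormalPDF_nonneg (u : ℝ) : 0 ≤ stdNormalPDF u := by
  unfold stdNormalPDF; positivity

lemma continuous_stdNormalPDF : Continuous stdNormalPDF := by
  unfold stdNormalPDF; fun_prop

lemma integrable_stdNormalPDF : Integrable stdNormalPDF :=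
  stdNormalPDF_eq_gaussianPDFReal ▸ ProbabilityTheory.integrable_gaussianPDFReal 0 1

lemma integral_stdNormalPDF : ∫ u, stdNormalPDF u = 1 := by
  rw [stdNormalPDF_eq_gaussianPDFReal]
  exact ProbabilityTheory.integral_gaussianPDFReal_eq_one 0 one_ne_zero

lemma stdNormalPDF_neg (u : ℝ) : stdNormalPDF (-u) = stdNormalPDF u := by
  simp [stdNormalPDF]

lemma stdNormalPDF_le_exp (u : ℝ) : stdNormalPDF u ≤ exp (1 / 2) * exp u := by
  have h_one_le : 1 ≤ √(2 * π) := one_le_sqrt.mpr (by linarith [pi_gt_three])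
  calc stdNormalPDF u ≤ exp (-u ^ 2 / 2) := div_le_self (exp_nonneg _) h_one_le
    _ ≤ exp (1 / 2) * exp u := by
      rw [← exp_add]
      exact exp_le_exp.mpr (by nlinarith [sq_nonneg (u + 1)])

lemma hasDerivAt_stdNormalPDF (x : ℝ) : HasDerivAt stdNormalPDF (-x * stdNormalPDF x) x := by
  have h_exponent : HasDerivAt (fun u : ℝ => -u ^ 2 / 2) (-x) x :=
    ((hasDerivAt_pow 2 x).neg.div_const 2).congr_deriv (by ring)
  exact (h_exponent.exp.div_const √(2 * π)).congr_deriv (by rw [stdNormalPDF]; ring)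

lemma stdNormalPDF_sqrt_two_mul (z : ℝ) :
    stdNormalPDF (√2 * z) = √2 * √π * stdNormalPDF z ^ 2 := by
  have h_exp : exp (-(√2 * z) ^ 2 / 2) = exp (-z ^ 2 / 2) ^ 2 := by
    rw [← exp_nat_mul, mul_pow, sq_sqrt zero_le_two]
    ring_nf
  have : 0 < √π := sqrt_pos.mpr pi_pos
  rw [stdNormalPDF, stdNormalPDF, h_exp, sqrt_mul zero_le_two π]
  field_simp

lemma stdNormalCDF_nonneg (z : ℝ) : 0 ≤ stdNormalCDF z :=
  setIntegral_nonneg measurableSet_Iic fun u _ => stdNormalPDF_nonneg u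

lemma stdNormalCDF_le_one (z : ℝ) : stdNormalCDF z ≤ 1 :=
  integral_stdNormalPDF ▸ setIntegral_le_integral integrable_stdNormalPDF
    (ae_of_all _ stdNormalPDF_nonneg)

lemma stdNormalCDF_le_exp (z : ℝ) : stdNormalCDF z ≤ exp (1 / 2) * exp z :=
  calc stdNormalCDF z ≤ ∫ u in Iic z, exp (1 / 2) * exp u :=
        setIntegral_mono_on integrable_stdNormalPDF.integrableOn
          ((integrableOn_exp_Iic z).const_mul _) measurableSet_Iic
          fun u _ => stdNormalPDF_le_exp u
    _ = exp (1 / 2) * exp z := by rw [integral_const_mul, integral_exp_Iic]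

lemma stdNormalCDF_sq_le_exp (z : ℝ) : stdNormalCDF z ^ 2 ≤ exp (1 / 2) * exp z := by
  nlinarith [stdNormalCDF_nonneg z, stdNormalCDF_le_one z, stdNormalCDF_le_exp z]

lemma stdNormalCDF_neg (z : ℝ) : stdNormalCDF (-z) = 1 - stdNormalCDF z := by
  have h_split := intervalIntegral.integral_Iic_add_Ioi (b := z)
    integrable_stdNormalPDF.integrableOn integrable_stdNormalPDF.integrableOn
  rw [integral_stdNormalPDF] at h_split
  rw [stdNormalCDF, ← integral_comp_neg_Ioi]
  simp only [stdNormalPDF_neg]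
  rw [stdNormalCDF]
  linarith

lemma hasDerivAt_stdNormalCDF (x : ℝ) : HasDerivAt stdNormalCDF (stdNormalPDF x) x := by
  have h_eq : (fun z => stdNormalCDF 0 + ∫ u in (0 : ℝ)..z, stdNormalPDF u) = stdNormalCDF := by
    ext z
    rw [stdNormalCDF, stdNormalCDF, ← intervalIntegral.integral_Iic_sub_Iic
      integrable_stdNormalPDF.integrableOn integrable_stdNormalPDF.integrableOn]
    ring
  exact h_eq ▸ ((continuous_stdNormalPDF.integral_hasStrictDerivAt 0 x).hasDerivAt.const_add _)

lemma continuous_stdNormalCDF : Continuous stdNormalCDF :=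
  continuous_iff_continuousAt.mpr fun x => (hasDerivAt_stdNormalCDF x).continuousAt

lemma tendsto_stdNormalPDF_atBot : Tendsto stdNormalPDF atBot (𝓝 0) :=
  squeeze_zero stdNormalPDF_nonneg stdNormalPDF_le_exp
    (by simpa using tendsto_exp_atBot.const_mul (exp (1 / 2)))

lemma tendsto_stdNormalCDF_atBot : Tendsto stdNormalCDF atBot (𝓝 0) :=
  squeeze_zero stdNormalCDF_nonneg stdNormalCDF_le_exp
    (by simpa using tendsto_exp_atBot.const_mul (exp (1 / 2)))

lemma tendsto_mul_stdNormalCDF_atBot : Tendsto (fun z => z * stdNormalCDF z) atBot (𝓝 0) := by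
  have h_bound : Tendsto (fun z : ℝ => exp (1 / 2) * (z * exp z)) atBot (𝓝 0) := by
    have := (tendsto_pow_mul_exp_neg_atTop_nhds_zero 1).comp tendsto_neg_atBot_atTop
    simpa using (this.neg.const_mul (exp (1 / 2)))
  refine tendsto_of_tendsto_of_tendsto_of_le_of_le' h_bound tendsto_const_nhds ?_ ?_
  · filter_upwards [eventually_le_atBot 0] with z hz
    nlinarith [stdNormalCDF_le_exp z]
  · filter_upwards [eventually_le_atBot 0] with z hz
    exact mul_nonpos_of_nonpos_of_nonneg hz (stdNormalCDF_nonneg z)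

/-- A primitive of `stdNormalCDF ^ 2`: differentiating the first two terms leaves
`2 * stdNormalPDF ^ 2`, a rescaled normal density, which the last term cancels. -/
noncomputable def stdNormalCDFSqPrimitive (z : ℝ) : ℝ :=
  z * stdNormalCDF z ^ 2 + 2 * stdNormalPDF z * stdNormalCDF z - stdNormalCDF (√2 * z) / √π

lemma hasDerivAt_stdNormalCDFSqPrimitive (z : ℝ) :
    HasDerivAt stdNormalCDFSqPrimitive (stdNormalCDF z ^ 2) z := by
  have hΦ := hasDerivAt_stdNormalCDF z
  have hφ := hasDerivAt_stdNormalPDF z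
  have hΦ_sqrt := (hasDerivAt_stdNormalCDF (√2 * z)).comp z ((hasDerivAt_id z).const_mul √2)
  have h := (((hasDerivAt_id z).mul (hΦ.pow 2)).add ((hφ.const_mul 2).mul hΦ)).sub
    (hΦ_sqrt.div_const √π)
  have : 0 < √π := sqrt_pos.mpr pi_pos
  refine h.congr_deriv ?_
  rw [stdNormalPDF_sqrt_two_mul]
  field_simp
  simp only [Pi.pow_apply, id, sq_sqrt zero_le_two]
  ring

lemma tendsto_stdNormalCDFSqPrimitive_atBot :
    Tendsto stdNormalCDFSqPrimitive atBot (𝓝 0) := by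
  have h_sqrt : Tendsto (fun z : ℝ => √2 * z) atBot atBot :=
    tendsto_id.const_mul_atBot (sqrt_pos.mpr zero_lt_two)
  have h := ((tendsto_mul_stdNormalCDF_atBot.mul tendsto_stdNormalCDF_atBot).add
    ((tendsto_stdNormalPDF_atBot.const_mul 2).mul tendsto_stdNormalCDF_atBot)).sub
    ((tendsto_stdNormalCDF_atBot.comp h_sqrt).div_const √π)
  simp only [mul_zero, add_zero, zero_div, sub_zero] at h
  refine h.congr fun z => ?_
  simp only [stdNormalCDFSqPrimitive, Function.comp_apply]
  ring

lemma integrableOn_stdNormalCDF_sq_Iic (z : ℝ) :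
    IntegrableOn (fun u => stdNormalCDF u ^ 2) (Iic z) := by
  refine ((integrableOn_exp_Iic z).const_mul (exp (1 / 2))).mono'
    (continuous_stdNormalCDF.pow 2).aestronglyMeasurable (ae_of_all _ fun u => ?_)
  exact (norm_of_nonneg (sq_nonneg _)).trans_le (stdNormalCDF_sq_le_exp u)

lemma integral_stdNormalCDF_sq_Iic (z : ℝ) :
    ∫ u in Iic z, stdNormalCDF u ^ 2 = stdNormalCDFSqPrimitive z := by
  simpa using integral_Iic_of_hasDerivAt_of_tendsto'
    (fun u _ => hasDerivAt_stdNormalCDFSqPrimitive u) (integrableOn_stdNormalCDF_sq_Iic z)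
    tendsto_stdNormalCDFSqPrimitive_atBot

lemma integrableOn_one_sub_stdNormalCDF_sq_Ioi (z : ℝ) :
    IntegrableOn (fun u => (1 - stdNormalCDF u) ^ 2) (Ioi z) := by
  simp only [← stdNormalCDF_neg]
  refine ((integrableOn_exp_neg_Ioi z).const_mul (exp (1 / 2))).mono'
    ((continuous_stdNormalCDF.comp continuous_neg).pow 2).aestronglyMeasurable
    (ae_of_all _ fun u => ?_)
  exact (norm_of_nonneg (sq_nonneg _)).trans_le (stdNormalCDF_sq_le_exp (-u))

lemma integral_one_sub_stdNormalCDF_sq_Ioi (z : ℝ) :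
    ∫ u in Ioi z, (1 - stdNormalCDF u) ^ 2 = stdNormalCDFSqPrimitive (-z) := by
  simp only [← stdNormalCDF_neg, integral_comp_neg_Ioi (f := fun u => stdNormalCDF u ^ 2),
    integral_stdNormalCDF_sq_Iic]

lemma crps_stdNormal (z : ℝ) :
    ∫ u, (stdNormalCDF u - if z ≤ u then 1 else 0) ^ 2 =
      z * (2 * stdNormalCDF z - 1) + 2 * stdNormalPDF z - 1 / √π := by
  set G : ℝ → ℝ := fun u => (stdNormalCDF u - if z ≤ u then 1 else 0) ^ 2
  have h_below : EqOn G (fun u => stdNormalCDF u ^ 2) (Iio z) := fun u hu => by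
    simp [G, not_le.mpr (mem_Iio.mp hu)]
  have h_above : EqOn G (fun u => (1 - stdNormalCDF u) ^ 2) (Ici z) := fun u hu => by
    simp only [G, if_pos (mem_Ici.mp hu)]
    ring
  have h_int_below : IntegrableOn G (Iio z) :=
    ((integrableOn_stdNormalCDF_sq_Iic z).mono_set Iio_subset_Iic_self).congr_fun
      h_below.symm measurableSet_Iio
  have h_int_above : IntegrableOn G (Ici z) := by
    refine IntegrableOn.congr_fun ?_ h_above.symm measurableSet_Ici
    exact (integrableOn_Ici_iff_integrableOn_Ioi).mpr (integrableOn_one_sub_stdNormalCDF_sq_Ioi z)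
  rw [← intervalIntegral.integral_Iio_add_Ici h_int_below h_int_above,
    setIntegral_congr_fun measurableSet_Iio h_below, ← integral_Iic_eq_integral_Iio,
    setIntegral_congr_fun measurableSet_Ici h_above, integral_Ici_eq_integral_Ioi,
    integral_stdNormalCDF_sq_Iic, integral_one_sub_stdNormalCDF_sq_Ioi]
  simp only [stdNormalCDFSqPrimitive, stdNormalPDF_neg, stdNormalCDF_neg, mul_neg]
  ring

/-- Closed-form CRPS of the Gaussian `N(m, σ²)` at the observation `y`. -/
theorem crps_gaussian_closed_form (m σ y : ℝ) (hσ : 0 < σ) :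
    (∫ t : ℝ, (stdNormalCDF ((t - m) / σ) - (if y ≤ t then (1 : ℝ) else 0)) ^ 2) =
      σ * (((y - m) / σ) * (2 * stdNormalCDF ((y - m) / σ) - 1)
        + 2 * stdNormalPDF ((y - m) / σ) - 1 / Real.sqrt Real.pi) := by
  set G : ℝ → ℝ := fun u => (stdNormalCDF u - if (y - m) / σ ≤ u then 1 else 0) ^ 2
  have h_scale : ∀ t, (stdNormalCDF ((t - m) / σ) - if y ≤ t then 1 else 0) ^ 2 =
      G ((t - m) / σ) := fun t => by
    simp only [G, div_le_div_iff_of_pos_right hσ, sub_le_sub_iff_right]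
  rw [← crps_stdNormal, funext h_scale, integral_sub_right_eq_self (fun t => G (t / σ)) m,
    Measure.integral_comp_div G σ, abs_of_pos hσ, smul_eq_mul]
end

section
/- Let μ be a probability measure on ℝ with continuous and strictly increasing cumulative distribution function F : ℝ → (0,1), finite first moment, and quantile function F⁻¹ : (0,1) → ℝ (the inverse of F). Then for every y ∈ ℝ, ∫₀¹ 2·(κ − 1_{y < F⁻¹(κ)})·(y − F⁻¹(κ)) dκ = ∫_ℝ (F(t) − 1_{t ≥ y})² dt, i.e., the quantile (pinball) loss integral over quantile levels κ ∈ (0,1) equals CRPS(F, y). -/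
/-!
The pinball loss is an integral over thresholds:
`Λ_κ(q, y) = ∫ (1_{y ≤ t} - 1_{q ≤ t}) (1_{y ≤ t} - κ) dt`, the integrand being `κ` on `[q, y)`
and `1 - κ` on `[y, q)`. For `κ ∈ (0, 1)` we have `F⁻¹ κ ≤ t ↔ κ ≤ F t`, so the left-hand side is
a double integral over `(0, 1) × ℝ` of a nonnegative function. Swapping the integrals (Tonelli),
the inner integral for fixed `t` is `∫₀¹ 2 (a - 1_{κ ≤ c}) (a - κ) dκ = (c - a)²` with
`a = 1_{y ≤ t} ∈ {0, 1}` and `c = F t`.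
-/

open MeasureTheory Set Function

/-- Both sides are the `toReal` of the same iterated lintegral, so no integrability on the
product is needed. -/
theorem integral_integral_swap_of_nonneg {α β : Type*} [MeasurableSpace α] [MeasurableSpace β]
    {μ : Measure α} {ν : Measure β} [SFinite μ] [SFinite ν] {f : α → β → ℝ}
    (hf : AEMeasurable (uncurry f) (μ.prod ν)) (hf₀ : ∀ᵐ x ∂μ, ∀ y, 0 ≤ f x y)
    (hfx : ∀ᵐ x ∂μ, Integrable (f x) ν) (hfy : ∀ᵐ y ∂ν, Integrable (fun x => f x y) μ) :
    ∫ x, ∫ y, f x y ∂ν ∂μ = ∫ y, ∫ x, f x y ∂μ ∂ν := by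
  have hx : ∀ᵐ x ∂μ, ∫ y, f x y ∂ν = (∫⁻ y, .ofReal (f x y) ∂ν).toReal := by
    filter_upwards [hf₀, hfx] with x h₀ hi
    exact integral_eq_lintegral_of_nonneg_ae (.of_forall h₀) hi.1
  have hy : ∀ᵐ y ∂ν, ∫ x, f x y ∂μ = (∫⁻ x, .ofReal (f x y) ∂μ).toReal := by
    filter_upwards [hfy] with y hi
    exact integral_eq_lintegral_of_nonneg_ae (hf₀.mono fun x h => h y) hi.1
  rw [integral_congr_ae hx, integral_congr_ae hy,
    integral_toReal (f := fun x => ∫⁻ y, .ofReal (f x y) ∂ν)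
      hf.ennreal_ofReal.lintegral_prod_right' (hfx.mono fun x h => h.lintegral_lt_top),
    integral_toReal (f := fun y => ∫⁻ x, .ofReal (f x y) ∂μ)
      hf.ennreal_ofReal.lintegral_prod_left' (hfy.mono fun y h => h.lintegral_lt_top),
    lintegral_lintegral_swap hf.ennreal_ofReal]

noncomputable def pinballLoss (κ q y : ℝ) : ℝ := (κ - if y < q then 1 else 0) * (y - q)

noncomputable def pinballIntegrand (κ q y t : ℝ) : ℝ :=
  ((if y ≤ t then 1 else 0) - if q ≤ t then 1 else 0) * ((if y ≤ t then 1 else 0) - κ)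

lemma pinballIntegrand_eq_indicator (κ q y : ℝ) :
    pinballIntegrand κ q y =
      (Ico q y).indicator (fun _ => κ) + (Ico y q).indicator (fun _ => 1 - κ) := by
  ext t
  simp only [pinballIntegrand, Pi.add_apply, indicator_apply, mem_Ico]
  split_ifs <;> grind

lemma pinballIntegrand_nonneg {κ : ℝ} (h₀ : 0 ≤ κ) (h₁ : κ ≤ 1) (q y t : ℝ) :
    0 ≤ pinballIntegrand κ q y t := by
  rw [pinballIntegrand_eq_indicator]
  exact add_nonneg (indicator_nonneg (fun _ _ => h₀) t)
    (indicator_nonneg (fun _ _ => sub_nonneg.2 h₁) t)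

lemma integrable_indicator_Ico_const (a b c : ℝ) : Integrable ((Ico a b).indicator fun _ => c) :=
  (integrableOn_const measure_Ico_lt_top.ne).integrable_indicator measurableSet_Ico

lemma integrable_pinballIntegrand (κ q y : ℝ) : Integrable (pinballIntegrand κ q y) := by
  rw [pinballIntegrand_eq_indicator]
  exact (integrable_indicator_Ico_const _ _ _).add (integrable_indicator_Ico_const _ _ _)

lemma integral_pinballIntegrand (κ q y : ℝ) :
    ∫ t, pinballIntegrand κ q y t = pinballLoss κ q y := by
  rw [pinballIntegrand_eq_indicator, integral_add' (integrable_indicator_Ico_const _ _ _)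
    (integrable_indicator_Ico_const _ _ _), integral_indicator_const _ measurableSet_Ico,
    integral_indicator_const _ measurableSet_Ico, Real.volume_real_Ico, Real.volume_real_Ico]
  unfold pinballLoss
  rcases le_or_gt q y with h | h
  · simp [not_lt.2 h, max_eq_left (sub_nonneg.2 h), max_eq_right (sub_nonpos.2 h)]; ring
  · simp [h, max_eq_right (sub_nonpos.2 h.le), max_eq_left (sub_nonneg.2 h.le)]; ring

lemma sub_ite_mul_eq_sub_indicator (a c κ : ℝ) :
    (a - if κ ≤ c then 1 else 0) * (a - κ) =
      a * (a - κ) - (Iic c).indicator (fun κ => a - κ) κ := by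
  by_cases hκ : κ ≤ c <;> simp [hκ]; ring

lemma integrableOn_Ioo_sub_ite_mul (a c : ℝ) :
    IntegrableOn (fun κ => (a - if κ ≤ c then 1 else 0) * (a - κ)) (Ioo 0 1) := by
  have h : IntegrableOn (fun κ : ℝ => a - κ) (Ioo 0 1) :=
    (continuous_const.sub continuous_id).integrableOn_Icc.mono_set Ioo_subset_Icc_self
  simp_rw [sub_ite_mul_eq_sub_indicator]
  exact (h.const_mul a).sub (h.indicator measurableSet_Iic)

lemma setIntegral_Ioo_sub_ite_mul (a : ℝ) {c : ℝ} (hc₀ : 0 ≤ c) (hc₁ : c ≤ 1) :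
    ∫ κ in Ioo 0 1, (a - if κ ≤ c then 1 else 0) * (a - κ) =
      a ^ 2 - a / 2 - a * c + c ^ 2 / 2 := by
  have h : IntegrableOn (fun κ : ℝ => a - κ) (Ioc 0 1) :=
    (continuous_const.sub continuous_id).integrableOn_Icc.mono_set Ioc_subset_Icc_self
  have hprimitive (b : ℝ) : ∫ κ in 0..b, (a - κ) = a * b - b ^ 2 / 2 := by
    simp [intervalIntegral.integral_sub intervalIntegrable_const
      intervalIntegral.intervalIntegrable_id]
    ring
  simp_rw [← integral_Ioc_eq_integral_Ioo, sub_ite_mul_eq_sub_indicator]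
  rw [integral_sub (h.const_mul a) (h.indicator measurableSet_Iic),
    integral_indicator measurableSet_Iic, Measure.restrict_restrict measurableSet_Iic,
    inter_comm, Ioc_inter_Iic, min_eq_right hc₁, integral_const_mul,
    ← intervalIntegral.integral_of_le zero_le_one, ← intervalIntegral.integral_of_le hc₀,
    hprimitive, hprimitive]
  ring

theorem quantile_loss_eq_crps_general
    (F Finv : ℝ → ℝ)
    (hFmono : StrictMono F)
    (hFrange : ∀ t, F t ∈ Set.Ioo (0 : ℝ) 1)
    (hInv2 : ∀ κ ∈ Set.Ioo (0 : ℝ) 1, F (Finv κ) = κ)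
    (y : ℝ) :
    (∫ κ in Set.Ioo (0 : ℝ) 1,
        2 * ((κ - (if y < Finv κ then (1 : ℝ) else 0)) * (y - Finv κ))) =
      ∫ t : ℝ, (F t - if y ≤ t then (1 : ℝ) else 0) ^ 2 := by
  set a : ℝ → ℝ := fun t => if y ≤ t then 1 else 0
  set k : ℝ → ℝ → ℝ := fun κ t => (a t - if κ ≤ F t then 1 else 0) * (a t - κ)
  have hk : ∀ κ ∈ Ioo (0 : ℝ) 1, k κ = pinballIntegrand κ (Finv κ) y := by
    intro κ hκ
    ext t
    have hle : Finv κ ≤ t ↔ κ ≤ F t := by rw [← hFmono.le_iff_le, hInv2 κ hκ]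
    simp only [k, a, pinballIntegrand, hle]
  have hk_meas : AEMeasurable (uncurry k) ((volume.restrict (Ioo 0 1)).prod volume) := by
    have ha : Measurable fun p : ℝ × ℝ => a p.2 :=
      Measurable.ite (measurableSet_le measurable_const measurable_snd)
        measurable_const measurable_const
    have hstep : Measurable fun p : ℝ × ℝ => if p.1 ≤ F p.2 then (1 : ℝ) else 0 :=
      Measurable.ite (measurableSet_le measurable_fst
        (hFmono.monotone.measurable.comp measurable_snd)) measurable_const measurable_const
    exact ((ha.sub hstep).mul (ha.sub measurable_fst)).aemeasurable
  have hswap := integral_integral_swap_of_nonneg hk_meas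
    (ae_restrict_of_forall_mem measurableSet_Ioo fun κ hκ t =>
      hk κ hκ ▸ pinballIntegrand_nonneg hκ.1.le hκ.2.le _ _ _)
    (ae_restrict_of_forall_mem measurableSet_Ioo fun κ hκ =>
      hk κ hκ ▸ integrable_pinballIntegrand _ _ _)
    (.of_forall fun t => integrableOn_Ioo_sub_ite_mul _ _)
  calc _ = 2 * ∫ κ in Ioo 0 1, ∫ t, k κ t := by
        rw [← integral_const_mul]
        refine setIntegral_congr_fun measurableSet_Ioo fun κ hκ => ?_
        rw [hk κ hκ, integral_pinballIntegrand, pinballLoss]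
    _ = ∫ t, 2 * ∫ κ in Ioo 0 1, k κ t := by rw [hswap, integral_const_mul]
    _ = _ := by
        congr 1
        ext t
        rw [setIntegral_Ioo_sub_ite_mul _ (hFrange t).1.le (hFrange t).2.le]
        simp only [a]
        split_ifs <;> ring

/-- The quantile (pinball) loss integral over quantile levels equals the CRPS. -/
theorem quantile_loss_eq_crps (μ : Measure ℝ) [IsProbabilityMeasure μ]
    (F Finv : ℝ → ℝ)
    (hF : ∀ t, F t = (μ (Set.Iic t)).toReal)
    (hFcont : Continuous F)
    (hFmono : StrictMono F)
    (hFrange : ∀ t, F t ∈ Set.Ioo (0 : ℝ) 1)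
    (hInt : Integrable id μ)
    (hInv1 : ∀ t, Finv (F t) = t)
    (hInv2 : ∀ κ ∈ Set.Ioo (0 : ℝ) 1, F (Finv κ) = κ)
    (y : ℝ) :
    (∫ κ in Set.Ioo (0 : ℝ) 1,
        2 * ((κ - (if y < Finv κ then (1 : ℝ) else 0)) * (y - Finv κ))) =
      ∫ t : ℝ, (F t - if y ≤ t then (1 : ℝ) else 0) ^ 2 :=
  quantile_loss_eq_crps_general F Finv hFmono hFrange hInv2 y
end

section
/- Let μ be an atomless probability measure on ℝ with cumulative distribution function F, finite first moment, and such that x ↦ x·F(x) is μ-integrable. Let Y be a random variable with law μ. Then for every y ∈ ℝ, CRPS(F, y) = E[|Y − y|] + E[Y] − 2·E[Y·F(Y)] (the probability-weighted moment decomposition of the CRPS). -/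
open MeasureTheory Set ENNReal

namespace CRPSAux

variable {α : Type*} [MeasurableSpace α]

lemma lint_ne_top_of_integrable {ν : Measure α} {f : α → ℝ} (hf : Integrable f ν) :
    ∫⁻ x, ENNReal.ofReal (f x) ∂ν ≠ ⊤ := by
  refine ne_top_of_le_ne_top hf.2.ne ?_
  refine lintegral_mono fun x => ?_
  rw [Real.enorm_eq_ofReal_abs]
  exact ENNReal.ofReal_le_ofReal (le_abs_self _)

lemma integral_eq_toReal {ν : Measure α} {f : α → ℝ} (hm : Measurable f) (h0 : ∀ x, 0 ≤ f x) :
    ∫ x, f x ∂ν = (∫⁻ x, ENNReal.ofReal (f x) ∂ν).toReal :=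
  integral_eq_lintegral_of_nonneg_ae (Filter.Eventually.of_forall h0) hm.aestronglyMeasurable

lemma integrable_of_lint {ν : Measure α} {f : α → ℝ} (hm : Measurable f) (h0 : ∀ x, 0 ≤ f x)
    (h : ∫⁻ x, ENNReal.ofReal (f x) ∂ν ≠ ⊤) : Integrable f ν := by
  refine ⟨hm.aestronglyMeasurable, ?_⟩
  rw [hasFiniteIntegral_iff_ofReal (Filter.Eventually.of_forall h0)]
  exact h.lt_top

lemma ofReal_eq_max (a : ℝ) : ENNReal.ofReal a = ENNReal.ofReal (max a 0) := by
  rcases le_or_gt a 0 with h | h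
  · simp [ENNReal.ofReal_of_nonpos h, max_eq_right h]
  · rw [max_eq_left h.le]

lemma lintA (μ : Measure ℝ) [SFinite μ] (y : ℝ) :
    ∫⁻ t in Iio y, μ (Iic t) = ∫⁻ x, ENNReal.ofReal (y - x) ∂μ := by
  set S : Set (ℝ × ℝ) := {p | p.2 ≤ p.1 ∧ p.1 < y} with hS
  have hSm : MeasurableSet S :=
    (measurableSet_le measurable_snd measurable_fst).inter
      (measurableSet_lt measurable_fst measurable_const)
  have hmeas : AEMeasurable (Function.uncurry fun t x => S.indicator (1 : ℝ × ℝ → ℝ≥0∞) (t, x))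
      ((volume : Measure ℝ).prod μ) := by
    have : (Function.uncurry fun t x => S.indicator (1 : ℝ × ℝ → ℝ≥0∞) (t, x)) = S.indicator (1 : ℝ × ℝ → ℝ≥0∞) := by
      ext p; rcases p with ⟨t, x⟩; rfl
    rw [this]
    exact (measurable_one.indicator hSm).aemeasurable
  have h1 : ∀ t : ℝ, ∫⁻ x, S.indicator (1 : ℝ × ℝ → ℝ≥0∞) (t, x) ∂μ
      = (Iio y).indicator (fun t => μ (Iic t)) t := by
    intro t
    rcases lt_or_ge t y with h | h
    · have : (fun x => S.indicator (1 : ℝ × ℝ → ℝ≥0∞) (t, x)) = (Iic t).indicator 1 := by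
        ext x
        by_cases hx : x ≤ t
        · simp [hS, Set.indicator_of_mem, hx, h, Set.indicator, Set.mem_Iic]
        · simp [hS, Set.indicator, hx, Set.mem_Iic]
      rw [this, lintegral_indicator_one measurableSet_Iic]
      exact (Set.indicator_of_mem (show t ∈ Iio y from h) fun t => μ (Iic t)).symm
    · have : (fun x => S.indicator (1 : ℝ × ℝ → ℝ≥0∞) (t, x)) = fun _ => (0 : ℝ≥0∞) := by
        ext x; simp [hS, Set.indicator, not_lt.2 h]
      rw [this, lintegral_zero, Set.indicator_of_notMem (by simpa using h)]
  have h2 : ∀ x : ℝ, ∫⁻ t, S.indicator (1 : ℝ × ℝ → ℝ≥0∞) (t, x) ∂(volume : Measure ℝ)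
      = ENNReal.ofReal (y - x) := by
    intro x
    have : (fun t => S.indicator (1 : ℝ × ℝ → ℝ≥0∞) (t, x)) = (Ico x y).indicator 1 := by
      ext t; simp [hS, Set.indicator, Set.mem_Ico, and_comm]
    rw [this, lintegral_indicator_one measurableSet_Ico, Real.volume_Ico]
  calc ∫⁻ t in Iio y, μ (Iic t)
      = ∫⁻ t, (Iio y).indicator (fun t => μ (Iic t)) t := by
        rw [lintegral_indicator measurableSet_Iio]
    _ = ∫⁻ t, ∫⁻ x, S.indicator (1 : ℝ × ℝ → ℝ≥0∞) (t, x) ∂μ := by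
        refine lintegral_congr fun t => (h1 t).symm
    _ = ∫⁻ x, ∫⁻ t, S.indicator (1 : ℝ × ℝ → ℝ≥0∞) (t, x) ∂(volume : Measure ℝ) ∂μ :=
        lintegral_lintegral_swap hmeas
    _ = ∫⁻ x, ENNReal.ofReal (y - x) ∂μ := lintegral_congr fun x => h2 x

lemma lintB (μ : Measure ℝ) [SFinite μ] (y : ℝ) :
    ∫⁻ t in Ici y, μ (Ioi t) = ∫⁻ x, ENNReal.ofReal (x - y) ∂μ := by
  set S : Set (ℝ × ℝ) := {p | p.1 < p.2 ∧ y ≤ p.1} with hS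
  have hSm : MeasurableSet S :=
    (measurableSet_lt measurable_fst measurable_snd).inter
      (measurableSet_le measurable_const measurable_fst)
  have hmeas : AEMeasurable (Function.uncurry fun t x => S.indicator (1 : ℝ × ℝ → ℝ≥0∞) (t, x))
      ((volume : Measure ℝ).prod μ) := by
    have : (Function.uncurry fun t x => S.indicator (1 : ℝ × ℝ → ℝ≥0∞) (t, x)) = S.indicator (1 : ℝ × ℝ → ℝ≥0∞) := by
      ext p; rcases p with ⟨t, x⟩; rfl
    rw [this]
    exact (measurable_one.indicator hSm).aemeasurable
  have h1 : ∀ t : ℝ, ∫⁻ x, S.indicator (1 : ℝ × ℝ → ℝ≥0∞) (t, x) ∂μ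
      = (Ici y).indicator (fun t => μ (Ioi t)) t := by
    intro t
    rcases le_or_gt y t with h | h
    · have : (fun x => S.indicator (1 : ℝ × ℝ → ℝ≥0∞) (t, x)) = (Ioi t).indicator 1 := by
        ext x
        by_cases hx : t < x
        · simp [hS, Set.indicator, hx, h, Set.mem_Ioi]
        · simp [hS, Set.indicator, hx, Set.mem_Ioi]
      rw [this, lintegral_indicator_one measurableSet_Ioi]
      exact (Set.indicator_of_mem (show t ∈ Ici y from h) fun t => μ (Ioi t)).symm
    · have : (fun x => S.indicator (1 : ℝ × ℝ → ℝ≥0∞) (t, x)) = fun _ => (0 : ℝ≥0∞) := by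
        ext x; simp [hS, Set.indicator, not_le.2 h]
      rw [this, lintegral_zero, Set.indicator_of_notMem (by simpa using h)]
  have h2 : ∀ x : ℝ, ∫⁻ t, S.indicator (1 : ℝ × ℝ → ℝ≥0∞) (t, x) ∂(volume : Measure ℝ)
      = ENNReal.ofReal (x - y) := by
    intro x
    have : (fun t => S.indicator (1 : ℝ × ℝ → ℝ≥0∞) (t, x)) = (Ico y x).indicator 1 := by
      ext t; simp [hS, Set.indicator, Set.mem_Ico, and_comm]
    rw [this, lintegral_indicator_one measurableSet_Ico, Real.volume_Ico]
  calc ∫⁻ t in Ici y, μ (Ioi t)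
      = ∫⁻ t, (Ici y).indicator (fun t => μ (Ioi t)) t := by
        rw [lintegral_indicator measurableSet_Ici]
    _ = ∫⁻ t, ∫⁻ x, S.indicator (1 : ℝ × ℝ → ℝ≥0∞) (t, x) ∂μ := by
        refine lintegral_congr fun t => (h1 t).symm
    _ = ∫⁻ x, ∫⁻ t, S.indicator (1 : ℝ × ℝ → ℝ≥0∞) (t, x) ∂(volume : Measure ℝ) ∂μ :=
        lintegral_lintegral_swap hmeas
    _ = ∫⁻ x, ENNReal.ofReal (x - y) ∂μ := lintegral_congr fun x => h2 x

lemma lintC (μ : Measure ℝ) [IsProbabilityMeasure μ] :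
    ∫⁻ t, μ (Iic t) * μ (Ioi t) ∂(volume : Measure ℝ)
      = ∫⁻ p : ℝ × ℝ, ENNReal.ofReal (p.2 - p.1) ∂(μ.prod μ) := by
  set S : Set (ℝ × (ℝ × ℝ)) := {q | q.2.1 ≤ q.1 ∧ q.1 < q.2.2} with hS
  have hSm : MeasurableSet S :=
    (measurableSet_le (measurable_fst.comp measurable_snd) measurable_fst).inter
      (measurableSet_lt measurable_fst (measurable_snd.comp measurable_snd))
  have hmeas : AEMeasurable (Function.uncurry fun (t : ℝ) (p : ℝ × ℝ) => S.indicator (1 : ℝ × (ℝ × ℝ) → ℝ≥0∞) (t, p))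
      ((volume : Measure ℝ).prod (μ.prod μ)) := by
    have : (Function.uncurry fun (t : ℝ) (p : ℝ × ℝ) => S.indicator (1 : ℝ × (ℝ × ℝ) → ℝ≥0∞) (t, p))
        = S.indicator (1 : ℝ × (ℝ × ℝ) → ℝ≥0∞) := by
      ext q; rcases q with ⟨t, p⟩; rfl
    rw [this]
    exact (measurable_one.indicator hSm).aemeasurable
  have h1 : ∀ t : ℝ, ∫⁻ p : ℝ × ℝ, S.indicator (1 : ℝ × (ℝ × ℝ) → ℝ≥0∞) (t, p) ∂(μ.prod μ)
      = μ (Iic t) * μ (Ioi t) := by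
    intro t
    have hset : (fun p : ℝ × ℝ => S.indicator (1 : ℝ × (ℝ × ℝ) → ℝ≥0∞) (t, p))
        = ((Iic t) ×ˢ (Ioi t)).indicator 1 := by
      ext p
      by_cases hp : p.1 ≤ t ∧ t < p.2
      · simp [hS, Set.indicator, hp, Set.mem_prod, Set.mem_Iic, Set.mem_Ioi, hp.1, hp.2]
      · simp only [hS, Set.indicator, Set.mem_setOf_eq, Set.mem_prod, Set.mem_Iic, Set.mem_Ioi]
        rw [if_neg hp, if_neg hp]
    rw [hset, lintegral_indicator_one (measurableSet_Iic.prod measurableSet_Ioi),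
      Measure.prod_prod]
  have h2 : ∀ p : ℝ × ℝ, ∫⁻ t, S.indicator (1 : ℝ × (ℝ × ℝ) → ℝ≥0∞) (t, p) ∂(volume : Measure ℝ)
      = ENNReal.ofReal (p.2 - p.1) := by
    intro p
    have : (fun t => S.indicator (1 : ℝ × (ℝ × ℝ) → ℝ≥0∞) (t, p))
        = (Ico p.1 p.2).indicator 1 := by
      ext t; simp [hS, Set.indicator, Set.mem_Ico]
    rw [this, lintegral_indicator_one measurableSet_Ico, Real.volume_Ico]
  calc ∫⁻ t, μ (Iic t) * μ (Ioi t) ∂(volume : Measure ℝ)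
      = ∫⁻ t, ∫⁻ p : ℝ × ℝ, S.indicator (1 : ℝ × (ℝ × ℝ) → ℝ≥0∞) (t, p) ∂(μ.prod μ) ∂(volume : Measure ℝ) := by
        refine lintegral_congr fun t => (h1 t).symm
    _ = ∫⁻ p : ℝ × ℝ, ∫⁻ t, S.indicator (1 : ℝ × (ℝ × ℝ) → ℝ≥0∞) (t, p) ∂(volume : Measure ℝ) ∂(μ.prod μ) :=
        lintegral_lintegral_swap hmeas
    _ = ∫⁻ p : ℝ × ℝ, ENNReal.ofReal (p.2 - p.1) ∂(μ.prod μ) := lintegral_congr fun p => h2 p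

end CRPSAux

/-- The probability-weighted moment (PWM) decomposition of the CRPS:
`CRPS(F, y) = E[|Y − y|] + E[Y] − 2·E[Y·F(Y)]` for `Y ∼ μ`. -/
theorem crps_pwm_decomposition (μ : Measure ℝ) [IsProbabilityMeasure μ]
    (hAtomless : ∀ x : ℝ, μ {x} = 0)
    (F : ℝ → ℝ) (hF : ∀ t, F t = (μ (Set.Iic t)).toReal)
    (hInt : Integrable id μ)
    (hInt2 : Integrable (fun x => x * F x) μ)
    (y : ℝ) :
    (∫ t : ℝ, (F t - if y ≤ t then (1 : ℝ) else 0) ^ 2) =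
      (∫ x, |x - y| ∂μ) + (∫ x, x ∂μ) - 2 * ∫ x, x * F x ∂μ := by
  open Set CRPSAux ENNReal in
  have hFeq : F = fun t => (μ (Set.Iic t)).toReal := funext hF
  subst hFeq
  set F : ℝ → ℝ := fun t => (μ (Set.Iic t)).toReal with hFdef
  have hFm : Measurable F :=
    Monotone.measurable fun a b hab =>
      ENNReal.toReal_mono (measure_ne_top μ _) (measure_mono (Set.Iic_subset_Iic.2 hab))
  have hF0 : ∀ t, 0 ≤ F t := fun t => ENNReal.toReal_nonneg
  have hF1 : ∀ t, F t ≤ 1 := fun t => by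
    have := ENNReal.toReal_mono (by simp) (prob_le_one (μ := μ) (s := Set.Iic t))
    simpa using this
  have hIoi : ∀ t, μ (Set.Ioi t) = 1 - μ (Set.Iic t) := fun t => by
    rw [← Set.compl_Iic, measure_compl measurableSet_Iic (measure_ne_top μ _), measure_univ]
  have h1F : ∀ t, 1 - F t = (μ (Set.Ioi t)).toReal := fun t => by
    rw [hIoi t, ENNReal.toReal_sub_of_le (prob_le_one) ENNReal.one_ne_top]
    simp [hFdef]
  have hIio : ∀ x : ℝ, μ (Set.Iio x) = μ (Set.Iic x) := fun x => by
    refine le_antisymm (measure_mono Set.Iio_subset_Iic_self) ?_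
    calc μ (Set.Iic x) = μ (Set.Iio x ∪ {x}) := by rw [Set.Iio_union_right]
      _ ≤ μ (Set.Iio x) + μ {x} := measure_union_le _ _
      _ = μ (Set.Iio x) := by rw [hAtomless, add_zero]
  -- piece 1 : ∫_{t<y} F
  have hmax1 : Integrable (fun x => max (y - x) 0) μ := ((integrable_const y).sub hInt).pos_part
  have hmax1m : Measurable fun x : ℝ => max (y - x) 0 :=
    (measurable_const.sub measurable_id).max measurable_const
  have hA : ∫⁻ t, ENNReal.ofReal ((Set.Iio y).indicator F t) ∂(volume : Measure ℝ)
      = ∫⁻ x, ENNReal.ofReal (max (y - x) 0) ∂μ := by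
    calc ∫⁻ t, ENNReal.ofReal ((Set.Iio y).indicator F t) ∂(volume : Measure ℝ)
        = ∫⁻ t, (Set.Iio y).indicator (fun t => ENNReal.ofReal (F t)) t ∂(volume : Measure ℝ) := by
          refine lintegral_congr fun t => ?_
          by_cases h : t ∈ Set.Iio y <;> simp [Set.indicator, h]
      _ = ∫⁻ t in Set.Iio y, ENNReal.ofReal (F t) ∂(volume : Measure ℝ) :=
          lintegral_indicator measurableSet_Iio _
      _ = ∫⁻ t in Set.Iio y, μ (Set.Iic t) ∂(volume : Measure ℝ) :=
          lintegral_congr fun t => ENNReal.ofReal_toReal (measure_ne_top μ _)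
      _ = ∫⁻ x, ENNReal.ofReal (y - x) ∂μ := CRPSAux.lintA μ y
      _ = ∫⁻ x, ENNReal.ofReal (max (y - x) 0) ∂μ :=
          lintegral_congr fun x => CRPSAux.ofReal_eq_max _
  have hg1nn : ∀ t, 0 ≤ (Set.Iio y).indicator F t := fun t =>
    Set.indicator_nonneg (fun a _ => hF0 a) t
  have hg1int : Integrable ((Set.Iio y).indicator F) (volume : Measure ℝ) :=
    CRPSAux.integrable_of_lint (hFm.indicator measurableSet_Iio) hg1nn
      (by rw [hA]; exact CRPSAux.lint_ne_top_of_integrable hmax1)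
  have hg1val : ∫ t, (Set.Iio y).indicator F t = ∫ x, max (y - x) 0 ∂μ := by
    rw [CRPSAux.integral_eq_toReal (hFm.indicator measurableSet_Iio) hg1nn, hA,
      ← CRPSAux.integral_eq_toReal hmax1m fun x => le_max_right _ _]
  -- piece 2 : ∫_{t≥y} (1 - F)
  have hmax2 : Integrable (fun x => max (x - y) 0) μ := (hInt.sub (integrable_const y)).pos_part
  have hmax2m : Measurable fun x : ℝ => max (x - y) 0 :=
    (measurable_id.sub measurable_const).max measurable_const
  have hg2m : Measurable fun t => 1 - F t := measurable_const.sub hFm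
  have hB : ∫⁻ t, ENNReal.ofReal ((Set.Ici y).indicator (fun t => 1 - F t) t) ∂(volume : Measure ℝ)
      = ∫⁻ x, ENNReal.ofReal (max (x - y) 0) ∂μ := by
    calc ∫⁻ t, ENNReal.ofReal ((Set.Ici y).indicator (fun t => 1 - F t) t) ∂(volume : Measure ℝ)
        = ∫⁻ t, (Set.Ici y).indicator (fun t => ENNReal.ofReal (1 - F t)) t ∂(volume : Measure ℝ) := by
          refine lintegral_congr fun t => ?_
          by_cases h : t ∈ Set.Ici y <;> simp [Set.indicator, h]
      _ = ∫⁻ t in Set.Ici y, ENNReal.ofReal (1 - F t) ∂(volume : Measure ℝ) :=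
          lintegral_indicator measurableSet_Ici _
      _ = ∫⁻ t in Set.Ici y, μ (Set.Ioi t) ∂(volume : Measure ℝ) :=
          lintegral_congr fun t => by rw [h1F t, ENNReal.ofReal_toReal (measure_ne_top μ _)]
      _ = ∫⁻ x, ENNReal.ofReal (x - y) ∂μ := CRPSAux.lintB μ y
      _ = ∫⁻ x, ENNReal.ofReal (max (x - y) 0) ∂μ :=
          lintegral_congr fun x => CRPSAux.ofReal_eq_max _
  have hg2nn : ∀ t, 0 ≤ (Set.Ici y).indicator (fun t => 1 - F t) t := fun t =>
    Set.indicator_nonneg (fun a _ => by linarith [hF1 a]) t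
  have hg2int : Integrable ((Set.Ici y).indicator fun t => 1 - F t) (volume : Measure ℝ) :=
    CRPSAux.integrable_of_lint (hg2m.indicator measurableSet_Ici) hg2nn
      (by rw [hB]; exact CRPSAux.lint_ne_top_of_integrable hmax2)
  have hg2val : ∫ t, (Set.Ici y).indicator (fun t => 1 - F t) t = ∫ x, max (x - y) 0 ∂μ := by
    rw [CRPSAux.integral_eq_toReal (hg2m.indicator measurableSet_Ici) hg2nn, hB,
      ← CRPSAux.integral_eq_toReal hmax2m fun x => le_max_right _ _]
  -- piece 3 : ∫ F (1 - F)
  have hg3m : Measurable fun t => F t * (1 - F t) := hFm.mul hg2m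
  have hg3nn : ∀ t, 0 ≤ F t * (1 - F t) := fun t => mul_nonneg (hF0 t) (by linarith [hF1 t])
  have hC : ∫⁻ t, ENNReal.ofReal (F t * (1 - F t)) ∂(volume : Measure ℝ)
      = ∫⁻ p : ℝ × ℝ, ENNReal.ofReal (p.2 - p.1) ∂(μ.prod μ) := by
    have h : ∀ t, ENNReal.ofReal (F t * (1 - F t)) = μ (Set.Iic t) * μ (Set.Ioi t) := fun t => by
      rw [h1F t, hFdef, ← ENNReal.toReal_mul,
        ENNReal.ofReal_toReal (ENNReal.mul_ne_top (measure_ne_top μ _) (measure_ne_top μ _))]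
    rw [lintegral_congr h, CRPSAux.lintC μ]
  -- Fubini computations on the product
  have hmap_snd : Measure.map Prod.snd (μ.prod μ) = μ := by
    rw [Measure.map_snd_prod, measure_univ, one_smul]
  have hmap_fst : Measure.map Prod.fst (μ.prod μ) = μ := by
    rw [Measure.map_fst_prod, measure_univ, one_smul]
  have hsnd_int : Integrable (fun p : ℝ × ℝ => p.2) (μ.prod μ) := by
    have := (integrable_map_measure (by rw [hmap_snd]; exact hInt.aestronglyMeasurable)
      measurable_snd.aemeasurable).mp (by rw [hmap_snd]; exact hInt)
    exact this
  have hfst_int : Integrable (fun p : ℝ × ℝ => p.1) (μ.prod μ) := by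
    have := (integrable_map_measure (by rw [hmap_fst]; exact hInt.aestronglyMeasurable)
      measurable_fst.aemeasurable).mp (by rw [hmap_fst]; exact hInt)
    exact this
  have hφm : Measurable fun p : ℝ × ℝ => max (p.2 - p.1) 0 :=
    (measurable_snd.sub measurable_fst).max measurable_const
  have hφint : Integrable (fun p : ℝ × ℝ => max (p.2 - p.1) 0) (μ.prod μ) := by
    refine Integrable.mono' (hsnd_int.abs.add hfst_int.abs) hφm.aestronglyMeasurable
      (Filter.Eventually.of_forall fun p => ?_)
    simp only [Pi.add_apply, Real.norm_eq_abs]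
    rw [abs_of_nonneg (le_max_right _ _)]
    exact max_le (by linarith [le_abs_self p.2, neg_abs_le p.1]) (by positivity)
  have hCfin : ∫⁻ p : ℝ × ℝ, ENNReal.ofReal (p.2 - p.1) ∂(μ.prod μ) ≠ ⊤ := by
    rw [lintegral_congr fun p : ℝ × ℝ => CRPSAux.ofReal_eq_max (p.2 - p.1)]
    exact CRPSAux.lint_ne_top_of_integrable hφint
  have hg3int : Integrable (fun t => F t * (1 - F t)) (volume : Measure ℝ) :=
    CRPSAux.integrable_of_lint hg3m hg3nn (by rw [hC]; exact hCfin)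
  have hg3val : ∫ t, F t * (1 - F t) = ∫ p : ℝ × ℝ, max (p.2 - p.1) 0 ∂(μ.prod μ) := by
    rw [CRPSAux.integral_eq_toReal hg3m hg3nn, hC,
      lintegral_congr fun p : ℝ × ℝ => CRPSAux.ofReal_eq_max (p.2 - p.1),
      ← CRPSAux.integral_eq_toReal hφm fun p => le_max_right _ _]
  -- evaluate ∫ φ over the product via Fubini
  have hh2m : Measurable fun p : ℝ × ℝ => if p.1 < p.2 then p.2 else 0 :=
    Measurable.ite (measurableSet_lt measurable_fst measurable_snd) measurable_snd
      measurable_const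
  have hh1m : Measurable fun p : ℝ × ℝ => if p.1 < p.2 then p.1 else 0 :=
    Measurable.ite (measurableSet_lt measurable_fst measurable_snd) measurable_fst
      measurable_const
  have hh2int : Integrable (fun p : ℝ × ℝ => if p.1 < p.2 then p.2 else 0) (μ.prod μ) := by
    refine Integrable.mono' hsnd_int.abs hh2m.aestronglyMeasurable
      (Filter.Eventually.of_forall fun p => ?_)
    by_cases h : p.1 < p.2 <;> simp [h, Real.norm_eq_abs, abs_nonneg]
  have hh1int : Integrable (fun p : ℝ × ℝ => if p.1 < p.2 then p.1 else 0) (μ.prod μ) := by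
    refine Integrable.mono' hfst_int.abs hh1m.aestronglyMeasurable
      (Filter.Eventually.of_forall fun p => ?_)
    by_cases h : p.1 < p.2 <;> simp [h, Real.norm_eq_abs, abs_nonneg]
  have hh2val : ∫ p : ℝ × ℝ, (if p.1 < p.2 then p.2 else 0) ∂(μ.prod μ) = ∫ x, x * F x ∂μ := by
    rw [integral_prod_symm _ hh2int]
    refine integral_congr_ae (Filter.Eventually.of_forall fun b => ?_)
    have h : (fun a : ℝ => if a < b then b else 0) = (Set.Iio b).indicator fun _ => b := by
      ext a; by_cases h : a < b <;> simp [Set.indicator, h]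
    calc ∫ a, (if a < b then b else 0) ∂μ
        = ∫ a, (Set.Iio b).indicator (fun _ => b) a ∂μ := by rw [h]
      _ = (μ (Set.Iio b)).toReal • b := integral_indicator_const b measurableSet_Iio
      _ = b * F b := by rw [hIio, smul_eq_mul, mul_comm, hFdef]
  have hh1val : ∫ p : ℝ × ℝ, (if p.1 < p.2 then p.1 else 0) ∂(μ.prod μ)
      = ∫ x, x * (1 - F x) ∂μ := by
    rw [integral_prod _ hh1int]
    refine integral_congr_ae (Filter.Eventually.of_forall fun a => ?_)
    have h : (fun b : ℝ => if a < b then a else 0) = (Set.Ioi a).indicator fun _ => a := by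
      ext b; by_cases h : a < b <;> simp [Set.indicator, h]
    calc ∫ b, (if a < b then a else 0) ∂μ
        = ∫ b, (Set.Ioi a).indicator (fun _ => a) b ∂μ := by rw [h]
      _ = (μ (Set.Ioi a)).toReal • a := integral_indicator_const a measurableSet_Ioi
      _ = a * (1 - F a) := by rw [← h1F, smul_eq_mul, mul_comm]
  have hφval : ∫ p : ℝ × ℝ, max (p.2 - p.1) 0 ∂(μ.prod μ)
      = (∫ x, x * F x ∂μ) - ∫ x, x * (1 - F x) ∂μ := by
    have hsplit : ∀ p : ℝ × ℝ, max (p.2 - p.1) 0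
        = (if p.1 < p.2 then p.2 else 0) - (if p.1 < p.2 then p.1 else 0) := fun p => by
      by_cases h : p.1 < p.2
      · rw [if_pos h, if_pos h, max_eq_left (by linarith)]
      · rw [if_neg h, if_neg h, max_eq_right (by linarith [not_lt.1 h]), sub_zero]
    calc ∫ p : ℝ × ℝ, max (p.2 - p.1) 0 ∂(μ.prod μ)
        = ∫ p : ℝ × ℝ, ((if p.1 < p.2 then p.2 else 0) - (if p.1 < p.2 then p.1 else 0))
            ∂(μ.prod μ) := integral_congr_ae (Filter.Eventually.of_forall hsplit)
      _ = (∫ p : ℝ × ℝ, (if p.1 < p.2 then p.2 else 0) ∂(μ.prod μ))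
            - ∫ p : ℝ × ℝ, (if p.1 < p.2 then p.1 else 0) ∂(μ.prod μ) :=
          integral_sub hh2int hh1int
      _ = (∫ x, x * F x ∂μ) - ∫ x, x * (1 - F x) ∂μ := by rw [hh2val, hh1val]
  have hx1F_int : Integrable (fun x => x * (1 - F x)) μ := by
    have h : (fun x : ℝ => x * (1 - F x)) = fun x => id x - x * F x := by
      ext x; simp [id]; ring
    rw [h]; exact hInt.sub hInt2
  have hx1F : ∫ x, x * (1 - F x) ∂μ = (∫ x, x ∂μ) - ∫ x, x * F x ∂μ := by
    have h : (fun x : ℝ => x * (1 - F x)) = fun x => x - x * F x := by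
      ext x; ring
    rw [h, integral_sub (by simpa [Function.id_def] using hInt) hInt2]
  -- decompose the CRPS integrand
  have hkey : ∀ t : ℝ, (F t - if y ≤ t then (1 : ℝ) else 0) ^ 2
      = (Set.Iio y).indicator F t + (Set.Ici y).indicator (fun t => 1 - F t) t
        - F t * (1 - F t) := by
    intro t
    by_cases h : y ≤ t
    · rw [if_pos h, Set.indicator_of_notMem (by simpa using h),
        Set.indicator_of_mem (by simpa using h)]
      ring
    · rw [if_neg h, Set.indicator_of_mem (by simpa using not_le.1 h),
        Set.indicator_of_notMem (by simpa using not_le.1 h)]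
      ring
  have habs : ∀ x : ℝ, max (y - x) 0 + max (x - y) 0 = |x - y| := fun x => by
    rcases le_total x y with h | h
    · rw [abs_of_nonpos (by linarith), max_eq_left (by linarith), max_eq_right (by linarith)]
      ring
    · rw [abs_of_nonneg (by linarith), max_eq_right (by linarith), max_eq_left (by linarith)]
      ring
  have habsval : (∫ x, max (y - x) 0 ∂μ) + ∫ x, max (x - y) 0 ∂μ = ∫ x, |x - y| ∂μ := by
    rw [← integral_add hmax1 hmax2]
    exact integral_congr_ae (Filter.Eventually.of_forall habs)
  calc (∫ t : ℝ, (F t - if y ≤ t then (1 : ℝ) else 0) ^ 2)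
      = ∫ t : ℝ, ((Set.Iio y).indicator F t + (Set.Ici y).indicator (fun t => 1 - F t) t
          - F t * (1 - F t)) := integral_congr_ae (Filter.Eventually.of_forall hkey)
    _ = (∫ t : ℝ, ((Set.Iio y).indicator F t + (Set.Ici y).indicator (fun t => 1 - F t) t))
          - ∫ t : ℝ, F t * (1 - F t) := integral_sub (hg1int.add hg2int) hg3int
    _ = (∫ t : ℝ, (Set.Iio y).indicator F t) + (∫ t : ℝ, (Set.Ici y).indicator (fun t => 1 - F t) t)
          - ∫ t : ℝ, F t * (1 - F t) := by rw [integral_add hg1int hg2int]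
    _ = (∫ x, |x - y| ∂μ) + (∫ x, x ∂μ) - 2 * ∫ x, x * F x ∂μ := by
      rw [hg1val, hg2val, hg3val, hφval, hx1F, habsval]
      ring
end

section
/- Let Y₁, …, Y_M (M ≥ 1) be independent, identically distributed real random variables whose common law μ is atomless, has cumulative distribution function F, finite first moment μ_Y := E[Y], and is such that x ↦ x·F(x) is μ-integrable, with C(F) := E[Y·F(Y)]. Then the plug-in estimator based on the empirical CDF satisfies E[ (1/M²) · Σ_{i=1}^M Σ_{j=1}^M Y_i · 1_{Y_j ≤ Y_i} ] = C(F) + (1/M)·(μ_Y − C(F)); in particular its bias relative to C(F) equals (μ_Y − C(F))/M. -/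
open MeasureTheory ProbabilityTheory

/-!
Expanding the expectation of the double sum, the `M` diagonal terms `E[Yᵢ · 1_{Yᵢ ≤ Yᵢ}]` equal
`E[Y]`, while each of the `M (M - 1)` off-diagonal terms is, by independence and Fubini,
`∫ x · μ(Iic x) dμ(x) = C(F)`. Hence the expectation is `(M E[Y] + M (M - 1) C(F)) / M²`.
-/

theorem Fintype.sum_sum_eq_of_diag_of_offDiag {ι R : Type*} [Fintype ι] [CommRing R]
    {a : ι → ι → R} {d c : R} (hdiag : ∀ i, a i i = d) (hoff : ∀ i j, i ≠ j → a i j = c) :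
    ∑ i, ∑ j, a i j = Fintype.card ι * (d + (Fintype.card ι - 1) * c) := by
  classical
  have hrow : ∀ i, ∑ j, a i j = d + (Fintype.card ι - 1) * c := by
    intro i
    rw [← Finset.add_sum_erase _ _ (Finset.mem_univ i), hdiag,
      Finset.sum_congr rfl fun j hj => hoff i j (Finset.ne_of_mem_erase hj).symm,
      Finset.sum_const, Finset.card_erase_of_mem (Finset.mem_univ i), Finset.card_univ,
      nsmul_eq_mul, Nat.cast_pred (Fintype.card_pos_iff.mpr ⟨i⟩)]
  simp only [hrow, Finset.sum_const, Finset.card_univ, nsmul_eq_mul]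

theorem measurable_mul_ite_le :
    Measurable fun p : ℝ × ℝ => p.1 * if p.2 ≤ p.1 then (1 : ℝ) else 0 :=
  measurable_fst.mul
    (Measurable.ite (measurableSet_le measurable_snd measurable_fst) measurable_const
      measurable_const)

theorem MeasureTheory.Integrable.mul_ite_le {α : Type*} [MeasurableSpace α] {ν : Measure α}
    {X Z : α → ℝ} (hX : Integrable X ν) (hZ : AEMeasurable Z ν) :
    Integrable (fun a => X a * if Z a ≤ X a then (1 : ℝ) else 0) ν := by
  refine hX.mono
    (measurable_mul_ite_le.comp_aemeasurable (hX.aemeasurable.prodMk hZ)).aestronglyMeasurable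
    (Filter.Eventually.of_forall fun a => ?_)
  split_ifs <;> simp

theorem integral_mul_ite_le (ν : Measure ℝ) [IsFiniteMeasure ν] (x : ℝ) :
    ∫ y, x * (if y ≤ x then (1 : ℝ) else 0) ∂ν = x * ν.real (Set.Iic x) := by
  have hind : (fun y => if y ≤ x then (1 : ℝ) else 0) = (Set.Iic x).indicator 1 := by
    ext y
    simp [Set.indicator_apply]
  rw [integral_const_mul, hind, integral_indicator_one measurableSet_Iic]

theorem integral_prod_mul_ite_le {μ ν : Measure ℝ} [SFinite μ] [IsFiniteMeasure ν]
    (hμ : Integrable id μ) :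
    ∫ p, p.1 * (if p.2 ≤ p.1 then (1 : ℝ) else 0) ∂μ.prod ν = ∫ x, x * ν.real (Set.Iic x) ∂μ := by
  have hint : Integrable (fun p : ℝ × ℝ => p.1 * if p.2 ≤ p.1 then (1 : ℝ) else 0) (μ.prod ν) :=
    (hμ.comp_fst ν).mul_ite_le measurable_snd.aemeasurable
  rw [integral_prod _ hint]
  simp only [integral_mul_ite_le]

theorem ProbabilityTheory.IndepFun.integral_mul_ite_le {Ω : Type*} [MeasurableSpace Ω]
    {P : Measure Ω} [IsFiniteMeasure P] {X Z : Ω → ℝ} (hXZ : IndepFun X Z P) (hX : Integrable X P)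
    (hZ : AEMeasurable Z P) :
    ∫ ω, X ω * (if Z ω ≤ X ω then (1 : ℝ) else 0) ∂P =
      ∫ x, x * (P.map Z).real (Set.Iic x) ∂P.map X := by
  have hlaw : Integrable id (P.map X) :=
    (integrable_map_measure aestronglyMeasurable_id hX.aemeasurable).mpr hX
  rw [← integral_prod_mul_ite_le hlaw, ← hXZ.map_prod_eq_prod_map_map hX.aemeasurable hZ,
    integral_map (hX.aemeasurable.prodMk hZ) measurable_mul_ite_le.aestronglyMeasurable]

theorem plugin_estimator_bias_general
    {Ω : Type*} [MeasurableSpace Ω] (P : Measure Ω) [IsProbabilityMeasure P]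
    (M : ℕ) (hM : 1 ≤ M)
    (Y : Fin M → Ω → ℝ) (hYm : ∀ i, Measurable (Y i))
    (hIndep : ProbabilityTheory.iIndepFun Y P)
    (μ : Measure ℝ) (hmap : ∀ i, P.map (Y i) = μ)
    (F : ℝ → ℝ) (hF : ∀ t, F t = (μ (Set.Iic t)).toReal)
    (hInt : Integrable id μ) :
    (∫ ω, (1 / (M : ℝ) ^ 2) * ∑ i : Fin M, ∑ j : Fin M,
        Y i ω * (if Y j ω ≤ Y i ω then (1 : ℝ) else 0) ∂P) =
      (∫ x, x * F x ∂μ) + (1 / (M : ℝ)) * ((∫ x, x ∂μ) - ∫ x, x * F x ∂μ) := by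
  have hYint : ∀ i, Integrable (Y i) P := fun i =>
    (integrable_map_measure aestronglyMeasurable_id (hYm i).aemeasurable).mp (hmap i ▸ hInt)
  have hterm : ∀ i j, Integrable (fun ω => Y i ω * if Y j ω ≤ Y i ω then (1 : ℝ) else 0) P :=
    fun i j => (hYint i).mul_ite_le (hYm j).aemeasurable
  have hdiag : ∀ i, ∫ ω, Y i ω * (if Y i ω ≤ Y i ω then (1 : ℝ) else 0) ∂P = ∫ x, x ∂μ := by
    intro i
    simp only [le_refl, if_true, mul_one, ← hmap i]
    exact (integral_map (hYm i).aemeasurable aestronglyMeasurable_id).symm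
  have hoff : ∀ i j, i ≠ j →
      ∫ ω, Y i ω * (if Y j ω ≤ Y i ω then (1 : ℝ) else 0) ∂P = ∫ x, x * F x ∂μ := by
    intro i j hij
    rw [(hIndep.indepFun hij).integral_mul_ite_le (hYint i) (hYm j).aemeasurable, hmap i, hmap j]
    simp only [hF, Measure.real]
  have hM0 : (M : ℝ) ≠ 0 := Nat.cast_ne_zero.mpr (by omega)
  have hrow : ∀ i, Integrable (fun ω => ∑ j, Y i ω * if Y j ω ≤ Y i ω then (1 : ℝ) else 0) P :=
    fun i => integrable_finsetSum _ fun j _ => hterm i j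
  rw [integral_const_mul, integral_finsetSum _ fun i _ => hrow i]
  simp only [fun i => integral_finsetSum Finset.univ fun j _ => hterm i j]
  rw [Fintype.sum_sum_eq_of_diag_of_offDiag hdiag hoff, Fintype.card_fin]
  field_simp
  ring

/-- The plug-in (empirical-CDF) estimator of the CDF term `C(F) = E[Y·F(Y)]` satisfies
`E[(1/M²)·Σᵢ Σⱼ Yᵢ·1_{Yⱼ ≤ Yᵢ}] = C(F) + (1/M)·(E[Y] − C(F))`, i.e.
its bias equals `(E[Y] − C(F))/M`. -/
theorem plugin_estimator_bias
    {Ω : Type*} [MeasurableSpace Ω] (P : Measure Ω) [IsProbabilityMeasure P]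
    (M : ℕ) (hM : 1 ≤ M)
    (Y : Fin M → Ω → ℝ) (hYm : ∀ i, Measurable (Y i))
    (hIndep : ProbabilityTheory.iIndepFun Y P)
    (μ : Measure ℝ) (hmap : ∀ i, P.map (Y i) = μ)
    (hAtomless : ∀ x : ℝ, μ {x} = 0)
    (F : ℝ → ℝ) (hF : ∀ t, F t = (μ (Set.Iic t)).toReal)
    (hInt : Integrable id μ)
    (hInt2 : Integrable (fun x => x * F x) μ) :
    (∫ ω, (1 / (M : ℝ) ^ 2) * ∑ i : Fin M, ∑ j : Fin M,
        Y i ω * (if Y j ω ≤ Y i ω then (1 : ℝ) else 0) ∂P) =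
      (∫ x, x * F x ∂μ) + (1 / (M : ℝ)) * ((∫ x, x ∂μ) - ∫ x, x * F x ∂μ) :=
  plugin_estimator_bias_general P M hM Y hYm hIndep μ hmap F hF hInt
end

section
/- (Discrete Tchakaloff / Carathéodory cubature) Let x₁, …, x_M be points of a set X, let λ₁, …, λ_M ≥ 0 be weights, and let φ : X → ℝⁿ. Then there exist a subset S ⊆ {1, …, M} with |S| ≤ n + 1 and nonnegative weights (w_i)_{i ∈ S} with Σ_{i ∈ S} w_i = Σ_{j=1}^M λ_j such that Σ_{i ∈ S} w_i · φ(x_i) = Σ_{j=1}^M λ_j · φ(x_j); i.e., the integral of the vector-valued function φ against the discrete measure Σ λ_j δ_{x_j} is exactly reproduced by a cubature rule supported on at most n + 1 of the original points. -/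
/-!
Normalised by the total mass, `∑ⱼ λⱼ φ(xⱼ)` is a barycentre of the points `φ(xⱼ)`, so it lies in
their convex hull. Carathéodory's theorem writes it as a convex combination of affinely independent
points among them, of which there are at most `n + 1` in `ℝⁿ`; scaling the coefficients back by
the total mass gives the cubature rule. A zero total mass forces all `λⱼ = 0`, and the empty rule
works.
-/

open Finset Module

section Caratheodory

variable {𝕜 ι E : Type*} [Field 𝕜] [LinearOrder 𝕜] [IsStrictOrderedRing 𝕜]
  [AddCommGroup E] [Module 𝕜 E] [FiniteDimensional 𝕜 E]

theorem exists_finset_card_le_finrank_add_one_of_mem_convexHull_range {p : ι → E} {v : E}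
    (hv : v ∈ convexHull 𝕜 (Set.range p)) :
    ∃ (S : Finset ι) (w : ι → 𝕜), #S ≤ finrank 𝕜 E + 1 ∧ (∀ i ∈ S, 0 ≤ w i) ∧
      ∑ i ∈ S, w i = 1 ∧ ∑ i ∈ S, w i • p i = v := by
  obtain ⟨κ, _, z, u, hz, hindep, hu_pos, hu_sum, hu_comb⟩ :=
    eq_pos_convex_span_of_mem_convexHull hv
  choose g hg using fun k => hz ⟨k, rfl⟩
  have hg_inj : Function.Injective g := fun a b hab =>
    hindep.injective <| by rw [← hg a, ← hg b, hab]
  have hw : ∀ k, Function.extend g u 0 (g k) = u k := hg_inj.extend_apply u 0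
  refine ⟨univ.map ⟨g, hg_inj⟩, Function.extend g u 0, ?_, ?_, ?_, ?_⟩
  · calc #(univ.map ⟨g, hg_inj⟩) = Fintype.card κ := card_map _
      _ ≤ finrank 𝕜 (vectorSpan 𝕜 (Set.range z)) + 1 := hindep.card_le_finrank_succ
      _ ≤ finrank 𝕜 E + 1 := by gcongr; exact Submodule.finrank_le _
  · simpa [hw] using fun k => (hu_pos k).le
  · simpa [hw] using hu_sum
  · simpa [hw, hg] using hu_comb

theorem exists_finset_card_le_finrank_add_one_sum_smul_eq [Fintype ι] (p : ι → E)
    {lam : ι → 𝕜} (hlam : ∀ j, 0 ≤ lam j) :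
    ∃ (S : Finset ι) (w : ι → 𝕜), #S ≤ finrank 𝕜 E + 1 ∧ (∀ i ∈ S, 0 ≤ w i) ∧
      ∑ i ∈ S, w i = ∑ j, lam j ∧ ∑ i ∈ S, w i • p i = ∑ j, lam j • p j := by
  rcases (sum_nonneg fun j _ => hlam j).eq_or_lt with hzero | hpos
  · have hlam_zero : ∀ j, lam j = 0 := fun j =>
      (sum_eq_zero_iff_of_nonneg fun i _ => hlam i).mp hzero.symm j (mem_univ j)
    exact ⟨∅, 0, by simp, by simp, by simp [hlam_zero], by simp [hlam_zero]⟩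
  have hmem : univ.centerMass lam p ∈ convexHull 𝕜 (Set.range p) :=
    univ.centerMass_mem_convexHull (fun j _ => hlam j) hpos fun j _ => Set.mem_range_self j
  obtain ⟨S, w, hcard, hw_nonneg, hw_sum, hw_comb⟩ :=
    exists_finset_card_le_finrank_add_one_of_mem_convexHull_range hmem
  refine ⟨S, (∑ j, lam j) • w, hcard, fun i hi => mul_nonneg hpos.le (hw_nonneg i hi), ?_, ?_⟩
  · simp [← mul_sum, hw_sum]
  · simp only [Pi.smul_apply, smul_eq_mul, mul_smul, ← smul_sum, hw_comb, centerMass,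
      smul_inv_smul₀ hpos.ne']

end Caratheodory

/-- Discrete Tchakaloff / Carathéodory cubature: the integral of a vector-valued
function `φ : X → ℝⁿ` against a discrete measure `Σⱼ λⱼ δ_{xⱼ}` is exactly reproduced
by a cubature rule with nonnegative weights supported on at most `n + 1` of the points. -/
theorem discrete_tchakaloff {X : Type*} (M n : ℕ)
    (x : Fin M → X) (lam : Fin M → ℝ) (hlam : ∀ j, 0 ≤ lam j)
    (φ : X → (Fin n → ℝ)) :
    ∃ (S : Finset (Fin M)) (w : Fin M → ℝ),
      S.card ≤ n + 1 ∧
      (∀ i ∈ S, 0 ≤ w i) ∧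
      (∑ i ∈ S, w i) = (∑ j, lam j) ∧
      (∑ i ∈ S, w i • φ (x i)) = ∑ j, lam j • φ (x j) := by
  simpa only [Module.finrank_fin_fun, Function.comp_apply] using
    exists_finset_card_le_finrank_add_one_sum_smul_eq (φ ∘ x) hlam
end

section
/- Let Y and Y′ be independent, identically distributed real random variables whose common law μ is atomless, has cumulative distribution function F, finite first moment, and is such that x ↦ x·F(x) is μ-integrable. Then (1/2)·E[|Y − Y′|] = 2·E[Y·F(Y)] − E[Y]. -/
/-!
Since `|a - b| = 2 max(a, b) - a - b`, it suffices to compute `E[max(Y, Y′)]`. Splitting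
`max(x, y) = x·1{y ≤ x} + y·1{x < y}` and exchanging the roles of `Y` and `Y′` in the second term
gives `E[max(Y, Y′)] = E[Y·μ(Iic Y)] + E[Y·μ(Iio Y)]`, and for an atomless law both measures are `F(Y)`.
-/

open MeasureTheory ProbabilityTheory Set

theorem ProbabilityTheory.IndepFun.integral_comp_eq_integral_prod {Ω β γ E : Type*}
    [MeasurableSpace Ω] [MeasurableSpace β] [MeasurableSpace γ]
    [NormedAddCommGroup E] [NormedSpace ℝ E] {P : Measure Ω} [IsFiniteMeasure P]
    {X : Ω → β} {Y : Ω → γ} (hXY : IndepFun X Y P) (hX : AEMeasurable X P)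
    (hY : AEMeasurable Y P) {g : β × γ → E}
    (hg : AEStronglyMeasurable g ((P.map X).prod (P.map Y))) :
    ∫ ω, g (X ω, Y ω) ∂P = ∫ p, g p ∂((P.map X).prod (P.map Y)) := by
  rw [← hXY.map_prod_eq_prod_map_map hX hY] at hg ⊢
  exact (integral_map (hX.prodMk hY) hg).symm

theorem integral_indicator_fst_prod {α : Type*} [MeasurableSpace α] {μ : Measure ℝ} [SFinite μ]
    {ν : Measure α} [IsFiniteMeasure ν] (hμ : Integrable id μ) {s : Set (ℝ × α)}
    (hs : MeasurableSet s) :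
    ∫ p, s.indicator Prod.fst p ∂(μ.prod ν) = ∫ x, x * ν.real (Prod.mk x ⁻¹' s) ∂μ := by
  have hint : Integrable (s.indicator Prod.fst) (μ.prod ν) := (hμ.comp_fst ν).indicator hs
  rw [integral_prod _ hint]
  congr 1 with x
  rw [mul_comm, ← smul_eq_mul, ← integral_indicator_const x (measurable_prodMk_left hs)]
  rfl

theorem integral_max_prod_self {μ : Measure ℝ} [IsFiniteMeasure μ] (hμ : Integrable id μ) :
    ∫ p, max p.1 p.2 ∂(μ.prod μ) =
      ∫ x, x * μ.real (Iic x) ∂μ + ∫ x, x * μ.real (Iio x) ∂μ := by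
  have hle : MeasurableSet {p : ℝ × ℝ | p.2 ≤ p.1} := measurableSet_le measurable_snd measurable_fst
  have hlt : MeasurableSet {p : ℝ × ℝ | p.2 < p.1} := measurableSet_lt measurable_snd measurable_fst
  have hsplit : (fun p : ℝ × ℝ => max p.1 p.2) = fun p =>
      {p : ℝ × ℝ | p.2 ≤ p.1}.indicator Prod.fst p +
        {p : ℝ × ℝ | p.2 < p.1}.indicator Prod.fst p.swap := by
    ext ⟨a, b⟩
    rcases le_or_gt b a with h | h
    · simp [h, h.not_gt]
    · simp [h, h.not_ge, h.le]
  have hfst : Integrable (fun p : ℝ × ℝ => p.1) (μ.prod μ) := hμ.comp_fst μ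
  have hint_le : Integrable (fun p : ℝ × ℝ => {p : ℝ × ℝ | p.2 ≤ p.1}.indicator Prod.fst p)
      (μ.prod μ) := hfst.indicator hle
  have hint_lt : Integrable (fun p : ℝ × ℝ => {p : ℝ × ℝ | p.2 < p.1}.indicator Prod.fst p.swap)
      (μ.prod μ) := (hfst.indicator hlt).swap
  rw [hsplit, integral_add hint_le hint_lt,
    integral_prod_swap (fun p => {p : ℝ × ℝ | p.2 < p.1}.indicator Prod.fst p),
    integral_indicator_fst_prod hμ hle, integral_indicator_fst_prod hμ hlt]
  rfl

theorem integral_abs_sub_prod_self {μ : Measure ℝ} [IsProbabilityMeasure μ] (hμ : Integrable id μ) :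
    ∫ p, |p.1 - p.2| ∂(μ.prod μ) = 2 * ∫ p, max p.1 p.2 ∂(μ.prod μ) - 2 * ∫ x, x ∂μ := by
  have habs : (fun p : ℝ × ℝ => |p.1 - p.2|) = fun p => 2 * max p.1 p.2 - p.1 - p.2 := by
    ext ⟨a, b⟩
    rw [← max_sub_min_eq_abs']
    linarith [min_add_max a b]
  have hfst : Integrable (fun p : ℝ × ℝ => p.1) (μ.prod μ) := hμ.comp_fst μ
  have hsnd : Integrable (fun p : ℝ × ℝ => p.2) (μ.prod μ) := hμ.comp_snd μ
  have hmax : Integrable (fun p : ℝ × ℝ => 2 * max p.1 p.2) (μ.prod μ) :=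
    (hfst.sup hsnd).const_mul 2
  have hmax_sub : Integrable (fun p : ℝ × ℝ => 2 * max p.1 p.2 - p.1) (μ.prod μ) := hmax.sub hfst
  rw [habs, integral_sub hmax_sub hsnd, integral_sub hmax hfst, integral_const_mul,
    integral_fun_fst (fun x : ℝ => x), integral_fun_snd (fun x : ℝ => x)]
  simp only [probReal_univ, one_smul]
  ring

theorem half_expected_abs_diff_eq_general
    {Ω : Type*} [MeasurableSpace Ω] (P : Measure Ω) [IsProbabilityMeasure P]
    (Y Y' : Ω → ℝ) (hY : Measurable Y) (hY' : Measurable Y')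
    (hIndep : ProbabilityTheory.IndepFun Y Y' P)
    (μ : Measure ℝ) (hmap : P.map Y = μ) (hmap' : P.map Y' = μ)
    (hAtomless : ∀ x : ℝ, μ {x} = 0)
    (F : ℝ → ℝ) (hF : ∀ t, F t = (μ (Set.Iic t)).toReal)
    (hInt : Integrable id μ) :
    (1 / 2) * (∫ ω, |Y ω - Y' ω| ∂P) = 2 * (∫ x, x * F x ∂μ) - ∫ x, x ∂μ := by
  have : IsProbabilityMeasure μ := hmap ▸ Measure.isProbabilityMeasure_map hY.aemeasurable
  have hIic : ∀ x, μ.real (Iic x) = F x := fun x => (hF x).symm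
  have hIio : ∀ x, μ.real (Iio x) = F x := fun x => by
    rw [hF, measureReal_def, measure_congr (Iio_ae_eq_Iic' (hAtomless x))]
  rw [hIndep.integral_comp_eq_integral_prod (g := fun p => |p.1 - p.2|) hY.aemeasurable
      hY'.aemeasurable (by fun_prop), hmap, hmap', integral_abs_sub_prod_self hInt,
    integral_max_prod_self hInt]
  simp only [hIic, hIio]
  ring

/-- Energy-score identity: for i.i.d. `Y, Y′` with atomless common law `μ` and CDF `F`,
`(1/2)·E[|Y − Y′|] = 2·E[Y·F(Y)] − E[Y]`. -/
theorem half_expected_abs_diff_eq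
    {Ω : Type*} [MeasurableSpace Ω] (P : Measure Ω) [IsProbabilityMeasure P]
    (Y Y' : Ω → ℝ) (hY : Measurable Y) (hY' : Measurable Y')
    (hIndep : ProbabilityTheory.IndepFun Y Y' P)
    (μ : Measure ℝ) (hmap : P.map Y = μ) (hmap' : P.map Y' = μ)
    (hAtomless : ∀ x : ℝ, μ {x} = 0)
    (F : ℝ → ℝ) (hF : ∀ t, F t = (μ (Set.Iic t)).toReal)
    (hInt : Integrable id μ)
    (hInt2 : Integrable (fun x => x * F x) μ) :
    (1 / 2) * (∫ ω, |Y ω - Y' ω| ∂P) = 2 * (∫ x, x * F x ∂μ) - ∫ x, x ∂μ :=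
  half_expected_abs_diff_eq_general P Y Y' hY hY' hIndep μ hmap hmap' hAtomless F hF hInt
end
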